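/- Let m ≥ 1 be a natural number, θ > 0, A > 0, and C ≥ 0 be real numbers, and let X be a random variable with probability density g(l) = θ^m·l^{m−1}·e^{−θl}/(m−1)! on (0,∞) (the Gamma distribution with integer shape m and rate θ). Then E[log₂(1 + A·X + C)] = ∫_0^∞ e^{−θ·max(β(t),0)} · ∑_{k=0}^{m−1} (θ·max(β(t),0))^k / k! dt, where β(t) = (2^t − 1 − C)/A. -/

import Mathlib

/-!
For `Y ≥ 0` the layer cake formula `E[Y] = ∫₀^∞ P[Y > t] dt` holds for lower Lebesgue integrals
without any integrability assumption; as both sides of the theorem are nonnegative, their Bochner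
integrals are the real parts of these lower integrals. Since `X > 0` almost surely and
`1 + A x + C > 0` for `x > 0`, the event `log₂(1 + A X + C) > t` is almost surely `X > β(t)`.
Finally `P[X > x]` is the Erlang tail at `max x 0`: the tail `e^{-θx} ∑_{k<m} (θx)^k/k!` is,
up to sign, an antiderivative of the density that vanishes at infinity, because the derivative
of the truncated exponential series is `θ` times the series truncated one term earlier.
-/

open Real MeasureTheory Finset Filter Topology Set
open scoped ENNReal Nat

noncomputable def erlangTail (θ : ℝ) (m : ℕ) (x : ℝ) : ℝ :=
  exp (-θ * x) * ∑ k ∈ range m, (θ * x) ^ k / k !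

lemma hasDerivAt_sum_range_pow_div_factorial (θ x : ℝ) (n : ℕ) :
    HasDerivAt (fun y => ∑ k ∈ range (n + 1), (θ * y) ^ k / k !)
      (θ * ∑ k ∈ range n, (θ * x) ^ k / k !) x := by
  induction n with
  | zero => simpa using hasDerivAt_const x (1 : ℝ)
  | succ n ih =>
    have hlast : HasDerivAt (fun y => (θ * y) ^ (n + 1) / (n + 1)! : ℝ → ℝ)
        (θ * ((θ * x) ^ n / n !)) x := by
      refine ((((hasDerivAt_id' x).const_mul θ).pow (n + 1)).div_const _).congr_deriv ?_
      rw [Nat.factorial_succ]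
      push_cast
      field_simp
    simp only [sum_range_succ _ (n + 1), sum_range_succ _ n, mul_add] at ih ⊢
    exact ih.fun_add hlast

lemma hasDerivAt_erlangTail (θ x : ℝ) (n : ℕ) :
    HasDerivAt (erlangTail θ (n + 1)) (-(θ ^ (n + 1) * x ^ n * exp (-θ * x) / n !)) x := by
  have hexp : HasDerivAt (fun y => exp (-θ * y)) (-θ * exp (-θ * x)) x := by
    simpa [mul_comm] using ((hasDerivAt_id x).const_mul (-θ)).exp
  refine (hexp.fun_mul (hasDerivAt_sum_range_pow_div_factorial θ x n)).congr_deriv ?_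
  rw [sum_range_succ, mul_pow]
  field_simp
  ring

@[fun_prop]
lemma continuous_erlangTail (θ : ℝ) (m : ℕ) : Continuous (erlangTail θ m) := by
  unfold erlangTail
  fun_prop

lemma tendsto_erlangTail_atTop {θ : ℝ} (hθ : 0 < θ) (m : ℕ) :
    Tendsto (erlangTail θ m) atTop (𝓝 0) := by
  have hθx : Tendsto (fun x => θ * x) atTop atTop := tendsto_id.const_mul_atTop hθ
  have hterm (k : ℕ) : Tendsto (fun x => (θ * x) ^ k * exp (-(θ * x)) / k !) atTop (𝓝 0) := by
    simpa using ((tendsto_pow_mul_exp_neg_atTop_nhds_zero k).comp hθx).div_const (k ! : ℝ)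
  convert tendsto_finsetSum (range m) fun k _ => hterm k using 1
  · ext x
    rw [erlangTail, mul_sum]
    refine sum_congr rfl fun k _ => ?_
    rw [neg_mul]
    ring
  · simp

lemma erlangTail_nonneg {θ x : ℝ} (hθ : 0 ≤ θ) (hx : 0 ≤ x) (m : ℕ) : 0 ≤ erlangTail θ m x := by
  unfold erlangTail
  positivity

lemma integrableOn_Ioi_erlang_density {θ x : ℝ} (hθ : 0 < θ) (hx : 0 ≤ x) (n : ℕ) :
    IntegrableOn (fun l => θ ^ (n + 1) * l ^ n * exp (-θ * l) / n !) (Ioi x) :=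
  integrableOn_Ioi_deriv_of_nonneg'
    (fun l _ => (hasDerivAt_erlangTail θ l n).neg.congr_deriv (neg_neg _))
    (fun l hl => by have : 0 ≤ l := hx.trans hl.out.le; positivity)
    (tendsto_erlangTail_atTop hθ (n + 1)).neg

lemma integral_Ioi_erlang_density {θ x : ℝ} (hθ : 0 < θ) (hx : 0 ≤ x) (n : ℕ) :
    ∫ l in Ioi x, θ ^ (n + 1) * l ^ n * exp (-θ * l) / n ! = erlangTail θ (n + 1) x := by
  have h := integral_Ioi_of_hasDerivAt_of_tendsto'
    (fun l _ => (hasDerivAt_erlangTail θ l n).neg.congr_deriv (neg_neg _))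
    (integrableOn_Ioi_erlang_density hθ hx n) (tendsto_erlangTail_atTop hθ (n + 1)).neg
  simpa using h

/-- The Gamma density of integer shape `n + 1`, indexed by `n` to avoid `m - 1` in `ℕ`. -/
noncomputable def erlangDensity (θ : ℝ) (n : ℕ) (l : ℝ) : ℝ≥0∞ :=
  ENNReal.ofReal (if 0 < l then θ ^ (n + 1) * l ^ n * exp (-θ * l) / n ! else 0)

lemma erlangDensity_of_nonpos (θ : ℝ) (n : ℕ) {l : ℝ} (hl : l ≤ 0) : erlangDensity θ n l = 0 := by
  simp [erlangDensity, hl.not_gt]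

lemma lintegral_Ioi_erlangDensity {θ : ℝ} (hθ : 0 < θ) (n : ℕ) (x : ℝ) :
    ∫⁻ l in Ioi x, erlangDensity θ n l = ENNReal.ofReal (erlangTail θ (n + 1) (max x 0)) := by
  have hx : 0 ≤ max x 0 := le_max_right x 0
  have hIoi : ∫⁻ l in Ioi x, erlangDensity θ n l = ∫⁻ l in Ioi (max x 0), erlangDensity θ n l := by
    rw [← lintegral_indicator measurableSet_Ioi, ← lintegral_indicator measurableSet_Ioi]
    congr 1
    ext l
    rcases le_or_gt l 0 with hl | hl
    · simp only [indicator_apply, erlangDensity_of_nonpos θ n hl, ite_self]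
    · simp only [indicator_apply, Set.mem_Ioi, max_lt_iff, hl, and_true]
  have hpos : ∀ l ∈ Ioi (max x 0),
      erlangDensity θ n l = ENNReal.ofReal (θ ^ (n + 1) * l ^ n * exp (-θ * l) / n !) :=
    fun l hl => by rw [erlangDensity, if_pos (hx.trans_lt hl)]
  rw [hIoi, setLIntegral_congr_fun measurableSet_Ioi hpos,
    ← ofReal_integral_eq_lintegral_ofReal (integrableOn_Ioi_erlang_density hθ hx n),
    integral_Ioi_erlang_density hθ hx n]
  exact (ae_restrict_iff' measurableSet_Ioi).2 (ae_of_all _ fun l hl => by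
    have : 0 ≤ l := hx.trans hl.out.le; positivity)

section

variable {Ω : Type*} [MeasurableSpace Ω] {μ : Measure Ω} {X : Ω → ℝ}

lemma ae_pos_of_map_eq_withDensity_erlangDensity {θ : ℝ} {n : ℕ} (hX : Measurable X)
    (hdist : μ.map X = volume.withDensity (erlangDensity θ n)) : ∀ᵐ ω ∂μ, 0 < X ω := by
  have hIic : μ (X ⁻¹' Iic 0) = 0 := by
    rw [← Measure.map_apply hX measurableSet_Iic, hdist, withDensity_apply _ measurableSet_Iic,
      setLIntegral_congr_fun measurableSet_Iic (fun l hl => erlangDensity_of_nonpos θ n hl),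
      lintegral_zero]
  simp only [ae_iff, not_lt]
  exact hIic

lemma measure_lt_of_map_eq_withDensity_erlangDensity {θ : ℝ} {n : ℕ} (hθ : 0 < θ)
    (hX : Measurable X) (hdist : μ.map X = volume.withDensity (erlangDensity θ n)) (x : ℝ) :
    μ {ω | x < X ω} = ENNReal.ofReal (erlangTail θ (n + 1) (max x 0)) := by
  rw [← lintegral_Ioi_erlangDensity hθ n x, ← withDensity_apply _ measurableSet_Ioi, ← hdist,
    Measure.map_apply hX measurableSet_Ioi]
  rfl

lemma lt_logb_one_add_mul_add_iff {b t A C x : ℝ} (hb : 1 < b) (hA : 0 < A)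
    (hx : 0 < 1 + A * x + C) : t < logb b (1 + A * x + C) ↔ (b ^ t - 1 - C) / A < x := by
  rw [lt_logb_iff_rpow_lt hb hx, div_lt_iff₀ hA]
  constructor <;> intro h <;> linarith

lemma integral_eq_integral_Ioi_of_measure_lt_eq {f : Ω → ℝ} {g : ℝ → ℝ} (hf_nn : 0 ≤ᵐ[μ] f)
    (hf : AEMeasurable f μ) (hg_nn : ∀ t ∈ Ioi (0 : ℝ), 0 ≤ g t)
    (hg : AEStronglyMeasurable g (volume.restrict (Ioi 0)))
    (h : ∀ t ∈ Ioi (0 : ℝ), μ {ω | t < f ω} = ENNReal.ofReal (g t)) :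
    ∫ ω, f ω ∂μ = ∫ t in Ioi 0, g t := by
  rw [integral_eq_lintegral_of_nonneg_ae hf_nn hf.aestronglyMeasurable,
    integral_eq_lintegral_of_nonneg_ae
      ((ae_restrict_iff' measurableSet_Ioi).2 (ae_of_all _ hg_nn)) hg,
    lintegral_eq_lintegral_meas_lt μ hf_nn hf, setLIntegral_congr_fun measurableSet_Ioi h]

end

theorem ergodic_capacity_layer_cake_general {Ω : Type*} [MeasurableSpace Ω] (μ : Measure Ω)
    (X : Ω → ℝ) (hX : Measurable X)
    (m : ℕ) (hm : 1 ≤ m) (θ A C : ℝ) (hθ : 0 < θ) (hA : 0 < A) (hC : 0 ≤ C)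
    (hdist : Measure.map X μ = volume.withDensity (fun l =>
      ENNReal.ofReal (if 0 < l then
        θ ^ m * l ^ (m - 1) * Real.exp (-θ * l) / (Nat.factorial (m - 1)) else 0))) :
    (∫ ω, Real.logb 2 (1 + A * X ω + C) ∂μ)
      = ∫ t in Set.Ioi (0 : ℝ),
          Real.exp (-θ * max (((2 : ℝ) ^ t - 1 - C) / A) 0) *
            ∑ k ∈ Finset.range m,
              (θ * max (((2 : ℝ) ^ t - 1 - C) / A) 0) ^ k / (Nat.factorial k) := by
  obtain ⟨n, rfl⟩ := Nat.exists_eq_add_of_le' hm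
  simp only [Nat.add_sub_cancel] at hdist
  change μ.map X = volume.withDensity (erlangDensity θ n) at hdist
  have hXpos := ae_pos_of_map_eq_withDensity_erlangDensity hX hdist
  have hSNR : ∀ᵐ ω ∂μ, 1 < 1 + A * X ω + C := by
    filter_upwards [hXpos] with ω hω
    linarith [mul_pos hA hω]
  refine integral_eq_integral_Ioi_of_measure_lt_eq (f := fun ω => logb 2 (1 + A * X ω + C))
    (g := fun t => erlangTail θ (n + 1) (max (((2 : ℝ) ^ t - 1 - C) / A) 0)) ?_
    (by unfold logb; fun_prop) (fun t _ => erlangTail_nonneg hθ.le (le_max_right _ _) _)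
    (Continuous.aestronglyMeasurable (by fun_prop (disch := norm_num))) fun t _ => ?_
  · filter_upwards [hSNR] with ω hω
    exact logb_nonneg one_lt_two hω.le
  · rw [← measure_lt_of_map_eq_withDensity_erlangDensity hθ hX hdist]
    refine measure_congr ?_
    filter_upwards [hSNR] with ω hω
    exact propext (lt_logb_one_add_mul_add_iff one_lt_two hA (one_pos.trans hω))

/-- Core of Theorem 2: if `X` has the Gamma density `g(l) = θ^m l^{m−1} e^{−θl}/(m−1)!`
on `(0,∞)` (integer shape `m ≥ 1`, rate `θ > 0`), then for `A > 0` and `C ≥ 0`,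
`E[log₂(1 + A·X + C)] = ∫_0^∞ e^{−θ·max(β(t),0)} ∑_{k=0}^{m−1} (θ·max(β(t),0))^k/k! dt`
where `β(t) = (2^t − 1 − C)/A`. -/
theorem ergodic_capacity_layer_cake {Ω : Type*} [MeasurableSpace Ω] (μ : Measure Ω)
    [IsProbabilityMeasure μ] (X : Ω → ℝ) (hX : Measurable X)
    (m : ℕ) (hm : 1 ≤ m) (θ A C : ℝ) (hθ : 0 < θ) (hA : 0 < A) (hC : 0 ≤ C)
    (hdist : Measure.map X μ = volume.withDensity (fun l =>
      ENNReal.ofReal (if 0 < l then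
        θ ^ m * l ^ (m - 1) * Real.exp (-θ * l) / (Nat.factorial (m - 1)) else 0))) :
    (∫ ω, Real.logb 2 (1 + A * X ω + C) ∂μ)
      = ∫ t in Set.Ioi (0 : ℝ),
          Real.exp (-θ * max (((2 : ℝ) ^ t - 1 - C) / A) 0) *
            ∑ k ∈ Finset.range m,
              (θ * max (((2 : ℝ) ^ t - 1 - C) / A) 0) ^ k / (Nat.factorial k) :=
  ergodic_capacity_layer_cake_general μ X hX m hm θ A C hθ hA hC hdist
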